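/- The acceptance-prefix law of SpecTr-GBV is a probability distribution: for every prefix x^i ∈ Ω^i with 0 ≤ i ≤ L−1 the rejection mass r(x^i) := Σ_{x∈Ω} w(x^i·x) − w(x^i) is nonnegative, α(x^L) ≥ 0 for every full block x^L ∈ Ω^L, and Σ_{i=0}^{L−1} Σ_{x^i ∈ Ω^i} r(x^i) + Σ_{x^L ∈ Ω^L} α(x^L) = 1. -/
import Mathlib


attribute [local instance] Classical.propDecidable

noncomputable section

/-- `s ∈ Ω^L` has the length-`i` prefix `x ∈ Ω^i`. -/
def HasPref {Ω : Type*} {L i : ℕ} (s : Fin L → Ω) (x : Fin i → Ω) : Prop :=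
  ∀ j : Fin L, ∀ hj : (j : ℕ) < i, s j = x ⟨(j : ℕ), hj⟩

/-- Mass of the length-`i` prefix `x` under the block distribution `p` on `Ω^L`. -/
def prefProb {Ω : Type*} [Fintype Ω] {L i : ℕ} (p : (Fin L → Ω) → ℝ) (x : Fin i → Ω) : ℝ :=
  ∑ s : Fin L → Ω, if HasPref s x then p s else 0

/-- `Bound(K) = Σ_{i=1}^{L} Σ_{x^i ∈ Ω^i} q(x^i)·[1 − (1 − min{p(x^i)/q(x^i), 1})^K]`
(the summand with `q(x^i) = 0` is automatically `0`). -/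
def Bound {Ω : Type*} [Fintype Ω] {L : ℕ} (p q : (Fin L → Ω) → ℝ) (K : ℕ) : ℝ :=
  ∑ i ∈ Finset.range L, ∑ x : Fin (i + 1) → Ω,
    prefProb q x * (1 - (1 - min (prefProb p x / prefProb q x) 1) ^ K)

/-- `π` is a coupling of `p^{⊗K}` and `q`: a pmf on `(Ω^L)^K × Ω^L` whose
`(X_1, …, X_K)`-marginal is the `K`-fold product of `p` and whose `Y`-marginal is `q`. -/
def IsCoupling {Ω : Type*} [Fintype Ω] {L K : ℕ} (p q : (Fin L → Ω) → ℝ)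
    (π : (Fin K → Fin L → Ω) × (Fin L → Ω) → ℝ) : Prop :=
  (∀ z, 0 ≤ π z) ∧
  (∀ X : Fin K → Fin L → Ω, ∑ y : Fin L → Ω, π (X, y) = ∏ k : Fin K, p (X k)) ∧
  (∀ y : Fin L → Ω, ∑ X : Fin K → Fin L → Ω, π (X, y) = q y)

/-- `π` is a conditionally i.i.d. coupling of `p^{⊗K}` and `q`: there is a kernel `κ`
from `Ω^L` to pmfs on `Ω^L` with `π(x_1, …, x_K, y) = q(y)·Π_k κ(y)(x_k)`. -/
def IsCondIIDCoupling {Ω : Type*} [Fintype Ω] {L K : ℕ} (p q : (Fin L → Ω) → ℝ)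
    (π : (Fin K → Fin L → Ω) × (Fin L → Ω) → ℝ) : Prop :=
  IsCoupling p q π ∧
  ∃ κ : (Fin L → Ω) → (Fin L → Ω) → ℝ,
    (∀ y x, 0 ≤ κ y x) ∧ (∀ y, ∑ x : Fin L → Ω, κ y x = 1) ∧
    (∀ X : Fin K → Fin L → Ω, ∀ y : Fin L → Ω, π (X, y) = q y * ∏ k : Fin K, κ y (X k))

/-- Acceptance length `τ(x_1, …, x_K, y)`: the largest `i ∈ {0, …, L}` such that
some draft `x_k` agrees with `y` on the first `i` coordinates. -/
def accLen {Ω : Type*} {L K : ℕ} (X : Fin K → Fin L → Ω) (y : Fin L → Ω) : ℕ :=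
  ((Finset.range (L + 1)).filter
    (fun i => ∃ k : Fin K, ∀ j : Fin L, (j : ℕ) < i → X k j = y j)).sup id

/-- `w(x^i) := q(x^i)·(1 − min{p(x^i)/q(x^i), 1})^K` (equal to `0` when `q(x^i) = 0`). -/
def wPref {Ω : Type*} [Fintype Ω] {L i : ℕ} (p q : (Fin L → Ω) → ℝ) (K : ℕ)
    (x : Fin i → Ω) : ℝ :=
  prefProb q x * (1 - min (prefProb p x / prefProb q x) 1) ^ K

section Aux

variable {Ω : Type*} [Fintype Ω] {L K i : ℕ}

lemma hasPref_snoc_iff (hi : i < L) (s : Fin L → Ω) (x : Fin i → Ω) (a : Ω) :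
    HasPref s (Fin.snoc x a) ↔ HasPref s x ∧ s ⟨i, hi⟩ = a := by
  constructor
  · intro H
    refine ⟨fun j hj => ?_, ?_⟩
    · have h' : (j : ℕ) < i + 1 := Nat.lt_succ_of_lt hj
      have hc : (⟨(j : ℕ), h'⟩ : Fin (i+1)) = Fin.castSucc ⟨j, hj⟩ := rfl
      rw [H j h', hc, Fin.snoc_castSucc]
    · have hc : (⟨i, Nat.lt_succ_self i⟩ : Fin (i+1)) = Fin.last i := rfl
      rw [H ⟨i, hi⟩ (Nat.lt_succ_self i), hc, Fin.snoc_last]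
  · rintro ⟨H, ha⟩ j hj
    rcases Nat.lt_or_ge (j : ℕ) i with h | h
    · have hc : (⟨(j : ℕ), hj⟩ : Fin (i+1)) = Fin.castSucc ⟨j, h⟩ := rfl
      rw [hc, Fin.snoc_castSucc, H j h]
    · have hji : (j : ℕ) = i := le_antisymm (Nat.lt_succ_iff.mp hj) h
      have hj' : j = (⟨i, hi⟩ : Fin L) := Fin.ext hji
      have hc : (⟨(j : ℕ), hj⟩ : Fin (i+1)) = Fin.last i := Fin.ext hji
      rw [hc, Fin.snoc_last, hj', ha]

lemma sum_snoc_prefProb (hi : i < L) (p : (Fin L → Ω) → ℝ) (x : Fin i → Ω) :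
    ∑ a : Ω, prefProb p (Fin.snoc x a) = prefProb p x := by
  unfold prefProb
  rw [Finset.sum_comm]
  refine Finset.sum_congr rfl fun s _ => ?_
  simp only [hasPref_snoc_iff hi]
  by_cases H : HasPref s x
  · simp only [H, true_and]
    rw [Finset.sum_ite_eq Finset.univ (s ⟨i, hi⟩) (fun _ => p s)]
    simp
  · simp [H]

lemma prefProb_nonneg {p : (Fin L → Ω) → ℝ} (hp0 : ∀ s, 0 ≤ p s) (x : Fin i → Ω) :
    0 ≤ prefProb p x := by
  refine Finset.sum_nonneg fun s _ => ?_
  split <;> simp [hp0 s]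

lemma prefProb_zero {p : (Fin L → Ω) → ℝ} (hp1 : ∑ s : Fin L → Ω, p s = 1)
    (x : Fin 0 → Ω) : prefProb p x = 1 := by
  have h : ∀ s : Fin L → Ω, HasPref s x := fun s j hj => absurd hj (Nat.not_lt_zero _)
  simp [prefProb, h, hp1]

lemma prefProb_full (p : (Fin L → Ω) → ℝ) (x : Fin L → Ω) : prefProb p x = p x := by
  have h : ∀ s : Fin L → Ω, HasPref s x ↔ s = x := by
    intro s
    constructor
    · intro H; funext j
      have := H j j.isLt
      rwa [Fin.eta] at this
    · rintro rfl j hj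
      rw [Fin.eta]
  simp only [prefProb, h]
  rw [Finset.sum_ite_eq' Finset.univ x p]
  simp

lemma mul_one_sub_min {P Q : ℝ} (hP : 0 ≤ P) (hQ : 0 ≤ Q) :
    Q * (1 - min (P / Q) 1) = max (Q - P) 0 := by
  rcases eq_or_lt_of_le hQ with h | h
  · rw [← h]
    simp only [zero_mul, zero_sub]
    rw [max_eq_right (neg_nonpos.mpr hP)]
  · rcases le_total P Q with hPQ | hPQ
    · rw [min_eq_left ((div_le_one h).mpr hPQ), max_eq_left (by linarith)]
      field_simp
    · rw [min_eq_right ((one_le_div h).mpr hPQ), max_eq_right (by linarith)]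
      simp

lemma wPref_nonneg (p q : (Fin L → Ω) → ℝ) (hq0 : ∀ s, 0 ≤ q s) (x : Fin i → Ω) :
    0 ≤ wPref p q K x := by
  apply mul_nonneg (prefProb_nonneg hq0 x)
  apply pow_nonneg
  have := min_le_right (prefProb p x / prefProb q x) 1
  linarith

lemma wPref_le_prefProb (p q : (Fin L → Ω) → ℝ) (hp0 : ∀ s, 0 ≤ p s)
    (hq0 : ∀ s, 0 ≤ q s) (x : Fin i → Ω) : wPref p q K x ≤ prefProb q x := by
  unfold wPref
  have h1 : 0 ≤ min (prefProb p x / prefProb q x) 1 :=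
    le_min (div_nonneg (prefProb_nonneg hp0 x) (prefProb_nonneg hq0 x)) zero_le_one
  have h2 : min (prefProb p x / prefProb q x) 1 ≤ 1 := min_le_right _ _
  calc prefProb q x * (1 - min (prefProb p x / prefProb q x) 1) ^ K
      ≤ prefProb q x * 1 :=
        mul_le_mul_of_nonneg_left (pow_le_one₀ (by linarith) (by linarith))
          (prefProb_nonneg hq0 x)
    _ = prefProb q x := mul_one _

lemma wPref_le_sum_snoc (hK : 1 ≤ K) (hi : i < L) (p q : (Fin L → Ω) → ℝ)
    (hp0 : ∀ s, 0 ≤ p s) (hq0 : ∀ s, 0 ≤ q s) (x : Fin i → Ω) :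
    wPref p q K x ≤ ∑ a : Ω, wPref p q K (Fin.snoc x a) := by
  set Q := prefProb q x with hQdef
  set P := prefProb p x with hPdef
  have hQ : 0 ≤ Q := prefProb_nonneg hq0 x
  have hP : 0 ≤ P := prefProb_nonneg hp0 x
  set Qa : Ω → ℝ := fun a => prefProb q (Fin.snoc x a) with hQadef
  set Pa : Ω → ℝ := fun a => prefProb p (Fin.snoc x a) with hPadef
  have hQa : ∀ a, 0 ≤ Qa a := fun a => prefProb_nonneg hq0 _
  have hPa : ∀ a, 0 ≤ Pa a := fun a => prefProb_nonneg hp0 _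
  have hsumQ : ∑ a, Qa a = Q := sum_snoc_prefProb hi q x
  have hsumP : ∑ a, Pa a = P := sum_snoc_prefProb hi p x
  set g : Ω → ℝ := fun a => 1 - min (Pa a / Qa a) 1 with hgdef
  have hg0 : ∀ a, 0 ≤ g a := fun a => by
    have := min_le_right (Pa a / Qa a) 1; simp only [hgdef]; linarith
  have hw : ∀ a, wPref p q K (Fin.snoc x a) = Qa a * g a ^ K := fun a => rfl
  rcases eq_or_lt_of_le hQ with h0 | h0
  · have hx0 : wPref p q K x = 0 := by
      unfold wPref; rw [← hQdef, ← h0, zero_mul]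
    rw [hx0]
    exact Finset.sum_nonneg fun a _ => wPref_nonneg p q hq0 _
  · set gx : ℝ := 1 - min (P / Q) 1 with hgxdef
    have hgx0 : 0 ≤ gx := by
      have := min_le_right (P / Q) 1; simp only [hgxdef]; linarith
    have key1 : Q * gx = max (Q - P) 0 := mul_one_sub_min hP hQ
    have key2 : ∀ a, Qa a * g a = max (Qa a - Pa a) 0 := fun a =>
      mul_one_sub_min (hPa a) (hQa a)
    have hmaxle : max (Q - P) 0 ≤ ∑ a, Qa a * g a := by
      simp only [key2]
      apply max_le
      · rw [← hsumQ, ← hsumP, ← Finset.sum_sub_distrib]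
        exact Finset.sum_le_sum fun a _ => le_max_left _ _
      · exact Finset.sum_nonneg fun a _ => le_max_right _ _
    have hgle : gx ≤ ∑ a, (Qa a / Q) * g a := by
      have hs : ∑ a, (Qa a / Q) * g a = (∑ a, Qa a * g a) / Q := by
        rw [Finset.sum_div]
        exact Finset.sum_congr rfl fun a _ => by ring
      rw [hs, le_div_iff₀ h0, mul_comm, key1]
      exact hmaxle
    have hwsum : ∑ a, (Qa a / Q) = 1 := by
      rw [← Finset.sum_div, hsumQ, div_self h0.ne']
    have jensen : (∑ a, (Qa a / Q) * g a) ^ K ≤ ∑ a, (Qa a / Q) * g a ^ K :=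
      Real.pow_arith_mean_le_arith_mean_pow Finset.univ _ _
        (fun a _ => div_nonneg (hQa a) hQ) hwsum (fun a _ => hg0 a) K
    have hmean0 : 0 ≤ ∑ a, (Qa a / Q) * g a :=
      Finset.sum_nonneg fun a _ => mul_nonneg (div_nonneg (hQa a) hQ) (hg0 a)
    calc wPref p q K x = Q * gx ^ K := rfl
      _ ≤ Q * (∑ a, (Qa a / Q) * g a) ^ K :=
          mul_le_mul_of_nonneg_left (pow_le_pow_left₀ hgx0 hgle K) hQ
      _ ≤ Q * ∑ a, (Qa a / Q) * g a ^ K := mul_le_mul_of_nonneg_left jensen hQ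
      _ = ∑ a, Qa a * g a ^ K := by
          rw [Finset.mul_sum]
          exact Finset.sum_congr rfl fun a _ => by
            field_simp
      _ = ∑ a, wPref p q K (Fin.snoc x a) := by
          exact Finset.sum_congr rfl fun a _ => (hw a).symm

end Aux

/-- The acceptance-prefix law of SpecTr-GBV is a probability distribution:
the rejection mass `r(x^i) = Σ_{a∈Ω} w(x^i·a) − w(x^i)` is nonnegative for every
prefix `x^i` with `0 ≤ i ≤ L−1`, `α(x^L) = q(x^L) − w(x^L) ≥ 0` for every full
block, and `Σ_{i=0}^{L−1} Σ_{x^i} r(x^i) + Σ_{x^L} α(x^L) = 1`. -/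
theorem acceptance_prefix_law_is_pmf
    {Ω : Type*} [Fintype Ω] [Nonempty Ω] {L K : ℕ} (hL : 1 ≤ L) (hK : 1 ≤ K)
    (p q : (Fin L → Ω) → ℝ)
    (hp0 : ∀ s, 0 ≤ p s) (hp1 : ∑ s : Fin L → Ω, p s = 1)
    (hq0 : ∀ s, 0 ≤ q s) (hq1 : ∑ s : Fin L → Ω, q s = 1) :
    (∀ i : ℕ, i < L → ∀ x : Fin i → Ω,
        0 ≤ (∑ a : Ω, wPref p q K (Fin.snoc x a)) - wPref p q K x) ∧
    (∀ x : Fin L → Ω, 0 ≤ prefProb q x - wPref p q K x) ∧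
    ((∑ i ∈ Finset.range L, ∑ x : Fin i → Ω,
        ((∑ a : Ω, wPref p q K (Fin.snoc x a)) - wPref p q K x))
      + ∑ x : Fin L → Ω, (prefProb q x - wPref p q K x)) = 1 := by

  have hr : ∀ i : ℕ, i < L → ∀ x : Fin i → Ω,
      0 ≤ (∑ a : Ω, wPref p q K (Fin.snoc x a)) - wPref p q K x := fun i hi x =>
    sub_nonneg.mpr (wPref_le_sum_snoc hK hi p q hp0 hq0 x)
  have ha : ∀ x : Fin L → Ω, 0 ≤ prefProb q x - wPref p q K x := fun x =>
    sub_nonneg.mpr (wPref_le_prefProb p q hp0 hq0 x)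
  refine ⟨hr, ha, ?_⟩
  set F : ℕ → ℝ := fun n => ∑ x : Fin n → Ω, wPref p q K x with hF
  have reindex : ∀ i : ℕ,
      ∑ x : Fin i → Ω, ∑ a : Ω, wPref p q K (Fin.snoc x a) = F (i + 1) := by
    intro i
    have h1 : ∑ z : (Fin i → Ω) × Ω, wPref p q K (Fin.snoc z.1 z.2)
        = ∑ x : Fin i → Ω, ∑ a : Ω, wPref p q K (Fin.snoc x a) :=
      Fintype.sum_prod_type (fun z => wPref p q K (Fin.snoc z.1 z.2))
    rw [← h1]
    let e : (Fin i → Ω) × Ω ≃ (Fin (i + 1) → Ω) :=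
      { toFun := fun z => Fin.snoc z.1 z.2
        invFun := fun y => (Fin.init y, y (Fin.last i))
        left_inv := by
          rintro ⟨x, a⟩
          simp only [Fin.init_snoc, Fin.snoc_last]
        right_inv := fun y => Fin.snoc_init_self y }
    exact Fintype.sum_equiv e _ _ (fun z => rfl)
  have hF0 : F 0 = 0 := by
    apply Finset.sum_eq_zero
    intro x _
    unfold wPref
    rw [prefProb_zero hq1 x, prefProb_zero hp1 x]
    simp [zero_pow (by omega : K ≠ 0)]
  have htel : ∑ i ∈ Finset.range L, ∑ x : Fin i → Ω,
      ((∑ a : Ω, wPref p q K (Fin.snoc x a)) - wPref p q K x) = F L - F 0 := by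
    rw [← Finset.sum_range_sub F]
    refine Finset.sum_congr rfl fun i _ => ?_
    rw [Finset.sum_sub_distrib, reindex i]
  have hlast : ∑ x : Fin L → Ω, (prefProb q x - wPref p q K x) = 1 - F L := by
    rw [Finset.sum_sub_distrib]
    congr 1
    rw [← hq1]
    exact Finset.sum_congr rfl fun x _ => prefProb_full q x
  rw [htel, hlast, hF0]
  ring
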